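/- Assume the pushforward measures of both f and g are atomless. Suppose that for μ⊗μ-almost every pair (x,x') ∈ X × X, f(x) ≤ f(x') implies g(x) ≤ g(x'). Then for every t ∈ [0,1] there exists t' ∈ [0,1] such that the threshold-t decision on f agrees μ-almost everywhere with the threshold-t' decision on g. -/

import Mathlib

/-!
Since the law of `g` has no atoms, its CDF is continuous, so by the intermediate value theorem
some `t' ∈ [0, 1]` gives `μ {g ≤ t'} = μ {f ≤ t}`. Then `{f ≤ t} \ {g ≤ t'}` and
`{g ≤ t'} \ {f ≤ t}` have the same measure, while the product of the two sets consists of pairs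
ordered one way by `f` and the other way by `g`, hence is `μ ⊗ μ`-null. So both differences are null.
-/

open MeasureTheory Set ProbabilityTheory

theorem StieltjesFunction.continuous_of_measure_singleton_eq_zero (f : StieltjesFunction ℝ)
    (h : ∀ x, f.measure {x} = 0) : Continuous f := by
  refine continuous_iff_continuousAt.2 fun x => ?_
  rw [f.mono.continuousAt_iff_leftLim_eq_rightLim, f.rightLim_eq]
  have hjump := h x
  rw [StieltjesFunction.measure_singleton, ENNReal.ofReal_eq_zero] at hjump
  exact le_antisymm (f.mono.leftLim_le le_rfl) (by linarith)

theorem ProbabilityTheory.continuous_cdf (ν : Measure ℝ) [IsProbabilityMeasure ν] [NullSingletonClass ν] :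
    Continuous (cdf ν) :=
  (cdf ν).continuous_of_measure_singleton_eq_zero fun x => by
    rw [measure_cdf, MeasureTheory.measure_singleton]

theorem ProbabilityTheory.exists_mem_Icc_measure_Iic_eq (ν : Measure ℝ) [IsProbabilityMeasure ν]
    [NullSingletonClass ν] {a b : ℝ} (hab : a ≤ b) (hν : ∀ᵐ x ∂ν, x ∈ Icc a b) {p : ENNReal} (hp : p ≤ 1) :
    ∃ t ∈ Icc a b, ν (Iic t) = p := by
  have hout : ν (Icc a b)ᶜ = 0 := mem_ae_iff.1 hν
  have hcdf_a : cdf ν a = 0 := by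
    have : ν (Iic a) = 0 := by
      refine measure_mono_null (fun x hx => ?_) (measure_union_null (measure_singleton a) hout)
      rcases (mem_Iic.1 hx).eq_or_lt with rfl | hlt
      · exact Or.inl rfl
      · exact Or.inr fun h => (h.1.trans_lt hlt).false
    rw [cdf_eq_real, measureReal_def, this, ENNReal.toReal_zero]
  have hcdf_b : cdf ν b = 1 := by
    have : ν (Iic b) = 1 :=
      (prob_compl_eq_zero_iff measurableSet_Iic).1 <|
        measure_mono_null (compl_subset_compl.2 Icc_subset_Iic_self) hout
    rw [cdf_eq_real, measureReal_def, this, ENNReal.toReal_one]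
  have hp_mem : p.toReal ∈ Icc (cdf ν a) (cdf ν b) := by
    rw [hcdf_a, hcdf_b]
    exact ⟨ENNReal.toReal_nonneg, ENNReal.toReal_le_of_le_ofReal zero_le_one (by simpa using hp)⟩
  obtain ⟨t, ht, hcdf_t⟩ := intermediate_value_Icc hab (continuous_cdf ν).continuousOn hp_mem
  refine ⟨t, ht, ?_⟩
  rw [← ofReal_cdf, hcdf_t, ENNReal.ofReal_toReal (ne_top_of_le_ne_top ENNReal.one_ne_top hp)]

theorem MeasureTheory.ae_eq_set_of_measure_eq_of_measure_sdiff_mul_eq_zero {α : Type*}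
    [MeasurableSpace α] {μ : Measure α} [IsFiniteMeasure μ] {s t : Set α}
    (hs : NullMeasurableSet s μ) (ht : NullMeasurableSet t μ) (hst : μ s = μ t)
    (h : μ (s \ t) * μ (t \ s) = 0) : s =ᵐ[μ] t := by
  have hsymm := measure_sdiff_symm hs ht hst (measure_ne_top μ _)
  rw [hsymm, mul_self_eq_zero] at h
  exact ae_eq_set.2 ⟨hsymm.trans h, h⟩

theorem MeasureTheory.setOf_le_ae_eq_of_measure_eq {α : Type*} [MeasurableSpace α]
    {μ : Measure α} [IsFiniteMeasure μ] {f g : α → ℝ} (hf : Measurable f) (hg : Measurable g)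
    (hmono : ∀ᵐ q ∂(μ.prod μ), f q.1 ≤ f q.2 → g q.1 ≤ g q.2) {s t : ℝ}
    (h : μ {x | f x ≤ s} = μ {x | g x ≤ t}) : {x | f x ≤ s} =ᵐ[μ] {x | g x ≤ t} := by
  refine ae_eq_set_of_measure_eq_of_measure_sdiff_mul_eq_zero
    (measurableSet_le hf measurable_const).nullMeasurableSet
    (measurableSet_le hg measurable_const).nullMeasurableSet h ?_
  rw [← Measure.prod_prod]
  refine measure_mono_null ?_ (ae_iff.1 hmono)
  rintro ⟨x, y⟩ ⟨⟨hfx, hgx⟩, ⟨hgy, hfy⟩⟩ hmono_xy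
  simp only [mem_ofPred_eq, not_le] at hfx hgx hgy hfy
  linarith [hmono_xy (by linarith)]

theorem comonotone_implies_threshold_decisions_agree_general
    {X : Type*} [MeasurableSpace X] (μ : Measure X) [IsProbabilityMeasure μ]
    (f g : X → ℝ) (hf : Measurable f) (hg : Measurable g)
    (hg01 : ∀ x, g x ∈ Set.Icc (0 : ℝ) 1)
    (hgAtomless : ∀ c : ℝ, μ.map g {c} = 0)
    (hmono : ∀ᵐ q ∂(μ.prod μ), f q.1 ≤ f q.2 → g q.1 ≤ g q.2) :
    ∀ t ∈ Set.Icc (0 : ℝ) 1, ∃ t' ∈ Set.Icc (0 : ℝ) 1,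
      (fun x => if t < f x then (1 : ℝ) else 0) =ᵐ[μ]
        (fun x => if t' < g x then (1 : ℝ) else 0) := by
  intro t _
  have : IsProbabilityMeasure (μ.map g) := Measure.isProbabilityMeasure_map hg.aemeasurable
  have : NullSingletonClass (μ.map g) := ⟨hgAtomless⟩
  obtain ⟨t', ht', hquantile⟩ := exists_mem_Icc_measure_Iic_eq (μ.map g) zero_le_one
    ((ae_map_iff hg.aemeasurable measurableSet_Icc).2 (ae_of_all μ hg01))
    (prob_le_one (μ := μ) (s := {x | f x ≤ t}))
  rw [Measure.map_apply hg measurableSet_Iic] at hquantile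
  refine ⟨t', ht', ?_⟩
  filter_upwards [setOf_le_ae_eq_of_measure_eq hf hg hmono hquantile.symm] with x hx
  have hiff : f x ≤ t ↔ g x ≤ t' := Iff.of_eq hx
  simp only [← not_le, hiff]

/-- backward direction of Theorem 3.7.
If, for `μ⊗μ`-almost every pair, `f`-order implies `g`-order, then every
threshold decision on `f` agrees `μ`-a.e. with some threshold decision on `g`. -/
theorem comonotone_implies_threshold_decisions_agree
    {X : Type*} [MeasurableSpace X] (μ : Measure X) [IsProbabilityMeasure μ]
    (f g : X → ℝ) (hf : Measurable f) (hg : Measurable g)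
    (hf01 : ∀ x, f x ∈ Set.Icc (0 : ℝ) 1) (hg01 : ∀ x, g x ∈ Set.Icc (0 : ℝ) 1)
    (hfAtomless : ∀ c : ℝ, μ.map f {c} = 0) (hgAtomless : ∀ c : ℝ, μ.map g {c} = 0)
    (hmono : ∀ᵐ q ∂(μ.prod μ), f q.1 ≤ f q.2 → g q.1 ≤ g q.2) :
    ∀ t ∈ Set.Icc (0 : ℝ) 1, ∃ t' ∈ Set.Icc (0 : ℝ) 1,
      (fun x => if t < f x then (1 : ℝ) else 0) =ᵐ[μ]
        (fun x => if t' < g x then (1 : ℝ) else 0) :=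
  comonotone_implies_threshold_decisions_agree_general μ f g hf hg hg01 hgAtomless hmono
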